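/- arXiv:2212.02699 — 10 statements merged into one kernel-verified Lean document; each statement's English description precedes it below -/
import Mathlib

section
/- A semigroup S satisfies (∀ a b)(∃ x): a = a*x*b if and only if S is regular and any two elements are L-related (i.e., S is a left group). -/
theorem stmt_1 (S : Type*) [Semigroup S] :
    (∀ a b : S, ∃ x : S, a = a * x * b) ↔
    ((∀ a : S, ∃ x : S, a = a * x * a) ∧
      ∀ a b : S, (a = b ∨ ∃ s : S, a = s * b) ∧ (b = a ∨ ∃ t : S, b = t * a)) := by
  constructor
  · intro h
    refine ⟨fun a => h a a, fun a b => ?_⟩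
    obtain ⟨x, hx⟩ := h a b
    obtain ⟨y, hy⟩ := h b a
    exact ⟨Or.inr ⟨a * x, hx⟩, Or.inr ⟨b * y, hy⟩⟩
  · rintro ⟨hreg, hL⟩ a b
    obtain ⟨x, hx⟩ := hreg a
    rcases (hL a b).1 with rfl | ⟨s, hs⟩
    · exact ⟨x, hx⟩
    · exact ⟨x * s, by rw [← mul_assoc, mul_assoc (a*x), ← hs, ← hx]⟩
end

section
/- A semigroup S satisfies (∀ a b)(∃ x): a = b*x*b if and only if S is a group, i.e., there is an identity element and every element has a two-sided inverse. -/
theorem stmt_2 (S : Type*) [Semigroup S] [Nonempty S] :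
    (∀ a b : S, ∃ x : S, a = b * x * b) ↔
    (∃ e : S, (∀ s : S, e * s = s ∧ s * e = s) ∧
      ∀ s : S, ∃ t : S, s * t = e ∧ t * s = e) := by
  constructor
  · intro h
    obtain ⟨b⟩ := ‹Nonempty S›
    obtain ⟨u, hu⟩ := h b b
    have left : ∀ a : S, (b * u) * a = a := by
      intro a
      obtain ⟨x, hx⟩ := h a b
      calc (b * u) * a = (b * u) * (b * x * b) := by rw [hx]
        _ = (b * u * b) * x * b := by simp [mul_assoc]
        _ = b * x * b := by rw [← hu]
        _ = a := hx.symm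
    have right : ∀ a : S, a * (u * b) = a := by
      intro a
      obtain ⟨x, hx⟩ := h a b
      calc a * (u * b) = (b * x * b) * (u * b) := by rw [hx]
        _ = b * x * (b * u * b) := by simp [mul_assoc]
        _ = b * x * b := by rw [← hu]
        _ = a := hx.symm
    have heq : b * u = u * b := by
      have := right (b * u); rw [left (u * b)] at this; exact this.symm
    refine ⟨b * u, fun s => ⟨left s, by rw [heq]; exact right s⟩, ?_⟩
    intro s
    obtain ⟨x, hx⟩ := h (b * u) s
    -- s * (x * s) = b*u and (s * x) * s = b*u
    have hr : s * (x * s) = b * u := by rw [← mul_assoc]; exact hx.symm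
    have hl : (s * x) * s = b * u := by rw [mul_assoc]; exact hr
    have key : s * x = x * s := by
      calc s * x = (s * x) * (u * b) := (right _).symm
        _ = (s * x) * (s * (x * s)) := by rw [hr, heq]
        _ = ((s * x) * s) * (x * s) := by simp [mul_assoc]
        _ = (b * u) * (x * s) := by rw [hl]
        _ = x * s := left _
    exact ⟨x * s, hr, by rw [← key]; exact hl⟩
  · rintro ⟨e, hid, hinv⟩
    intro a b
    obtain ⟨t, ht1, ht2⟩ := hinv b
    refine ⟨t * a * t, ?_⟩
    calc a = e * a * e := by rw [(hid a).1, (hid _).2]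
      _ = (b * t) * a * (t * b) := by rw [ht1, ht2]
      _ = b * (t * a * t) * b := by simp [mul_assoc]
end

section
/- A semigroup S satisfies (∀ a)(∃ x): a = a²*x*a² if and only if S is completely regular, i.e., for every a there exists x with a = a*x*a and a*x = x*a. -/
theorem stmt_3 (S : Type*) [Semigroup S] :
    (∀ a : S, ∃ x : S, a = a * a * x * (a * a)) ↔
    (∀ a : S, ∃ x : S, a = a * x * a ∧ a * x = x * a) := by
  constructor
  · intro h a
    obtain ⟨x, hx⟩ := h a
    obtain ⟨u, hu⟩ : ∃ u : S, u = a * x * a := ⟨_, rfl⟩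
    have h1 : a = a * u * a := by
      rw [hu]; simp only [mul_assoc] at hx ⊢; exact hx
    have key : a * a * x * a = a * x * a * a := by
      have e1 : a * a * x * a = a * a * x * (a * a * x * (a * a)) :=
        congrArg (fun t => a * a * x * t) hx
      have e2 : a * a * x * (a * a * x * (a * a))
          = a * a * x * (a * a) * (x * (a * a)) := by simp only [mul_assoc]
      have e3 : a * a * x * (a * a) * (x * (a * a)) = a * (x * (a * a)) :=
        congrArg (fun t => t * (x * (a * a))) hx.symm
      have e4 : a * (x * (a * a)) = a * x * a * a := by simp only [mul_assoc]
      rw [e1, e2, e3, e4]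
    have h2 : a * u = u * a := by
      rw [hu]
      calc a * (a * x * a) = a * a * x * a := by simp only [mul_assoc]
        _ = a * x * a * a := key
    refine ⟨u * a * u, ?_, ?_⟩
    · have e : a * (u * a * u) * a = a * u * a * (u * a) := by
        simp only [mul_assoc]
      calc a = a * u * a := h1
        _ = (a * u * a) * u * a := congrArg (fun t => t * u * a) h1
        _ = a * (u * a * u) * a := by simp only [mul_assoc]
    · calc a * (u * a * u) = (a * u * a) * u := by simp only [mul_assoc]
        _ = a * u := congrArg (fun t => t * u) h1.symm
        _ = u * a := h2
        _ = u * (a * u * a) := congrArg (fun t => u * t) h1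
        _ = (u * a * u) * a := by simp only [mul_assoc]
  · intro h a
    obtain ⟨x, hx, hc⟩ := h a
    have h3 : a = a * x * a * x * a := hx.trans (congrArg (fun t => t * x * a) hx)
    have h5 : a = a * x * a * x * a * x * a * x * a :=
      h3.trans (congrArg (fun t => t * x * a * x * a) h3)
    refine ⟨x * x * x * x * a, ?_⟩
    have swr : ∀ r : S, x * (a * r) = a * (x * r) := fun r => by
      rw [← mul_assoc, ← hc, mul_assoc]
    conv_lhs => rw [h5]
    simp only [mul_assoc, swr, ← hc]
end

section
/- If a semigroup S is completely regular (every element a has an x with a = a*x*a and a*x = x*a), then for every a there exists x with a = a²*x*a², and conversely if for every a there exists x with a = a²*x*a² then S is completely regular. -/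
theorem stmt_4 (S : Type*) [Semigroup S] :
    ((∀ a : S, ∃ x : S, a = a * x * a ∧ a * x = x * a) →
      ∀ a : S, ∃ x : S, a = a * a * x * (a * a)) ∧
    ((∀ a : S, ∃ x : S, a = a * a * x * (a * a)) →
      ∀ a : S, ∃ x : S, a = a * x * a ∧ a * x = x * a) := by
  constructor
  · intro H a
    obtain ⟨x, h, c⟩ := H a
    use x * x * x
    have h2 : a * a * x = a := by
      rw [mul_assoc, c, ← mul_assoc, ← h]
    have h1 : x * (a * a) = a := by
      rw [← mul_assoc, ← c, ← h]
    calc a = a * x * a := h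
      _ = a * x * (x * (a * a)) := by rw [h1]
      _ = a * (x * x) * (a * a) := by simp only [mul_assoc]
      _ = a * a * x * (x * x) * (a * a) := by rw [h2]
      _ = a * a * (x * x * x) * (a * a) := by simp only [mul_assoc]
  · intro H a
    obtain ⟨x, h⟩ := H a
    have hL : a * a * x * a * a = a := by
      rw [mul_assoc (a*a*x)] ; exact h.symm
    have hR : a * (a * (x * (a * a))) = a := by
      simp only [← mul_assoc]; exact hL
    set y := a * x * a * a * a * x * a with hy
    have key : a * (a * (x * a)) = a * (x * (a * a)) := by
      have e1 : a * (a * (x * (a * (a * (x * (a * a)))))) = a * (a * (x * a)) := by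
        rw [hR]
      have e2 : a * (a * (x * (a * (a * (x * (a * a)))))) = a * (x * (a * a)) := by
        simp only [← mul_assoc]
        rw [hL]
      exact e1.symm.trans e2
    refine ⟨y, ?_, ?_⟩
    · -- a = a * y * a , flat: a a x a a a x a a
      have : a * y * a = a := by
        rw [hy]
        simp only [← mul_assoc]
        rw [hL, hL]
      exact this.symm
    · -- a*y = a a x a a a x a = a a x a ; y*a = a x a a a x a a = a x a a
      have l1 : a * y = a * (a * (x * a)) := by
        rw [hy]
        simp only [← mul_assoc]
        rw [hL]
      have l2 : y * a = a * (x * (a * a)) := by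
        rw [hy]
        simp only [mul_assoc]
        rw [hR]
      rw [l1, l2, key]
end

section
/- For any semigroup S, if there exists an element x that is an inverse of every element of S (i.e., a = a*x*a and x = x*a*x for all a), then S is a rectangular band: every element is idempotent and a*b*a = a for all a, b. -/
theorem stmt_8 (S : Type*) [Semigroup S]
    (h : ∃ x : S, ∀ a : S, a = a * x * a ∧ x = x * a * x) :
    (∀ a : S, a * a = a) ∧ (∀ a b : S, a * b * a = a) := by
  obtain ⟨x, hx⟩ := h
  have key : ∀ c : S, x * c * x = x := fun c => ((hx c).2).symm
  have idem : ∀ a : S, a * a = a := by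
    intro a
    calc a * a = (a * x * a) * (a * x * a) := by rw [← (hx a).1]
    _ = a * (x * (a * a) * x) * a := by simp [mul_assoc]
    _ = a * x * a := by rw [key, mul_assoc]
    _ = a := ((hx a).1).symm
  refine ⟨idem, fun a b => ?_⟩
  calc a * b * a = (a * x * a) * b * (a * x * a) := by rw [← (hx a).1]
  _ = a * (x * (a * b * a) * x) * a := by simp [mul_assoc]
  _ = a * x * a := by rw [key, mul_assoc]
  _ = a := ((hx a).1).symm
end

section
/- For a semigroup S, the following are equivalent: (i) for every a there exists x with a = a²*x; (ii) every a is R-related to a² (a and a² generate the same principal right ideal); (iii) every R-class of S is a subsemigroup (closed under multiplication). -/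
theorem stmt_10 (S : Type*) [Semigroup S] :
    let leR : S → S → Prop := fun a b => a = b ∨ ∃ s : S, a = b * s
    let R : S → S → Prop := fun a b => leR a b ∧ leR b a
    ((∀ a : S, ∃ x : S, a = a * a * x) ↔ (∀ a : S, R a (a * a))) ∧
    ((∀ a : S, R a (a * a)) ↔ (∀ a b : S, R a b → R (a * b) a)) := by
  intro leR R
  have ii_to_i : (∀ a : S, R a (a * a)) → (∀ a : S, ∃ x : S, a = a * a * x) := by
    intro h a
    rcases (h a).1 with heq | ⟨x, hx⟩
    · exact ⟨a, by rw [← heq, ← heq]⟩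
    · exact ⟨x, hx⟩
  constructor
  · constructor
    · intro h a
      obtain ⟨x, hx⟩ := h a
      exact ⟨Or.inr ⟨x, hx⟩, Or.inr ⟨a, rfl⟩⟩
    · exact ii_to_i
  · constructor
    · intro h a b hab
      obtain ⟨x, hx⟩ := ii_to_i h a
      refine ⟨Or.inr ⟨b, rfl⟩, ?_⟩
      rcases hab.2 with hb | ⟨t, ht⟩
      · rw [hb]; exact (h a).1
      · rcases hab.1 with ha | ⟨s, hs⟩
        · -- a = b = a * t
          refine Or.inr ⟨x, ?_⟩
          -- a * b = a * (a * t); a * a = a * (a * t) since a = a * t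
          have haa : a * a = a * b := by rw [← ha]
          rw [← haa]; exact hx
        · -- a = b * s, b = a * t ⇒ a * a = a * b * s
          refine Or.inr ⟨s * x, ?_⟩
          have haa : a * a = a * b * s := by rw [mul_assoc, ← hs]
          rw [← mul_assoc, ← haa]; exact hx
    · intro h a
      have := h a a ⟨Or.inl rfl, Or.inl rfl⟩
      exact ⟨this.2, this.1⟩
end

section
/- For a semigroup S, the following are equivalent: (i) for every a there exists x with a = a²*x*a; (ii) a R a² for all a, and every R-class contains an idempotent; (iii) S is regular and each R-class of S is closed under multiplication. -/
theorem stmt_11 (S : Type*) [Semigroup S] :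
    let leR : S → S → Prop := fun a b => a = b ∨ ∃ s : S, a = b * s
    let R : S → S → Prop := fun a b => leR a b ∧ leR b a
    ((∀ a : S, ∃ x : S, a = a * a * x * a) ↔
      ((∀ a : S, R a (a * a)) ∧ ∀ a : S, ∃ e : S, R a e ∧ e * e = e)) ∧
    (((∀ a : S, R a (a * a)) ∧ ∀ a : S, ∃ e : S, R a e ∧ e * e = e) ↔
      ((∀ a : S, ∃ x : S, a = a * x * a) ∧ ∀ a b : S, R a b → R (a * b) a)) := by
  intro leR R
  -- (i) → (ii)
  have h12 : (∀ a : S, ∃ x : S, a = a * a * x * a) →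
      ((∀ a : S, R a (a * a)) ∧ ∀ a : S, ∃ e : S, R a e ∧ e * e = e) := by
    intro h
    constructor
    · intro a
      obtain ⟨x, hx⟩ := h a
      refine ⟨Or.inr ⟨x * a, ?_⟩, Or.inr ⟨a, rfl⟩⟩
      rw [← mul_assoc]; exact hx
    · intro a
      obtain ⟨x, hx⟩ := h a
      refine ⟨a * a * x, ⟨Or.inr ⟨a, hx⟩, Or.inr ⟨a * x, by rw [mul_assoc]⟩⟩, ?_⟩
      calc a * a * x * (a * a * x) = a * a * x * a * (a * x) := by
            simp only [mul_assoc]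
        _ = a * (a * x) := by rw [← hx]
        _ = a * a * x := by rw [mul_assoc]
  -- (ii) → (i)
  have h21 : ((∀ a : S, R a (a * a)) ∧ ∀ a : S, ∃ e : S, R a e ∧ e * e = e) →
      (∀ a : S, ∃ x : S, a = a * a * x * a) := by
    rintro ⟨h1, h2⟩ a
    -- first: regularity
    have hreg : ∃ y : S, a = a * y * a := by
      obtain ⟨e, ⟨hae, hea⟩, he⟩ := h2 a
      rcases hea with hea | ⟨t, ht⟩
      · -- e = a, so a idempotent
        subst hea
        exact ⟨e, by rw [he, he]⟩
      · rcases hae with hae | ⟨s, hs⟩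
        · -- a = e, so a idempotent
          subst hae
          exact ⟨a, by rw [he, he]⟩
        · -- a = e*s, e = a*t : then a = e*a = a*t*a
          have hea' : e * a = a := by
            conv_lhs => rw [hs, ← mul_assoc, he]
            exact hs.symm
          exact ⟨t, by rw [← ht, hea']⟩
    obtain ⟨y, hy⟩ := hreg
    rcases (h1 a).1 with h | ⟨s, hs⟩
    · exact ⟨y, by calc a = a * y * a := hy
        _ = a * a * y * a := by rw [← h]⟩
    · refine ⟨s * y, ?_⟩
      calc a = a * y * a := hy
        _ = a * a * s * y * a := by rw [← hs]
        _ = a * a * (s * y) * a := by rw [mul_assoc (a*a)]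
  -- (i) → (iii)
  have h13 : (∀ a : S, ∃ x : S, a = a * a * x * a) →
      ((∀ a : S, ∃ x : S, a = a * x * a) ∧ ∀ a b : S, R a b → R (a * b) a) := by
    intro h
    constructor
    · intro a
      obtain ⟨x, hx⟩ := h a
      exact ⟨a * x, by rw [← mul_assoc]; exact hx⟩
    · rintro a b ⟨hab, hba⟩
      refine ⟨Or.inr ⟨b, rfl⟩, ?_⟩
      obtain ⟨x, hx⟩ := h a
      rcases hab with hab | ⟨v, hv⟩
      · refine Or.inr ⟨x * a, ?_⟩
        rw [← hab, ← mul_assoc]; exact hx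
      · refine Or.inr ⟨v * (x * a), ?_⟩
        calc a = a * a * x * a := hx
          _ = a * (b * v) * x * a := by rw [← hv]
          _ = a * b * (v * (x * a)) := by simp only [mul_assoc]
  -- (iii) → (i)
  have h31 : ((∀ a : S, ∃ x : S, a = a * x * a) ∧ ∀ a b : S, R a b → R (a * b) a) →
      (∀ a : S, ∃ x : S, a = a * a * x * a) := by
    rintro ⟨hreg, hcl⟩ a
    obtain ⟨y, hy⟩ := hreg a
    have hRaa : R a a := ⟨Or.inl rfl, Or.inl rfl⟩
    rcases (hcl a a hRaa).2 with h | ⟨s, hs⟩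
    · exact ⟨y, by calc a = a * y * a := hy
        _ = a * a * y * a := by rw [← h]⟩
    · refine ⟨s * y, ?_⟩
      calc a = a * y * a := hy
        _ = a * a * s * y * a := by rw [← hs]
        _ = a * a * (s * y) * a := by rw [mul_assoc (a*a)]
  exact ⟨⟨h12, h21⟩, ⟨fun h => h13 (h21 h), fun h => h12 (h31 h)⟩⟩
end

section
/- A semigroup S satisfies (∀ a)(∃ x): a = a²*x*a if and only if it satisfies (∀ a)(∃ x): a = a*x*a², and each is equivalent to S being completely regular (for every a there exists x with a = a*x*a and a*x = x*a). -/
section Aux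

variable {S : Type*} [Semigroup S]

private lemma lemA (h : ∀ a : S, ∃ x : S, a = a * a * x * a) :
    ∀ a : S, ∃ x : S, a = a * x * (a * a) := by
  intro a
  obtain ⟨x, hx⟩ := h a
  obtain ⟨u, hu⟩ := h (x * a)
  simp only [mul_assoc] at hx hu
  -- hx : a = a*(a*(x*a)), hu : x*a = x*(a*(x*(a*(u*(x*a)))))
  have r1 : ∀ y : S, a * (a * (x * (a * y))) = a * y := by
    intro y
    conv_rhs => rw [hx]
    simp only [mul_assoc]
  have r3 : a * (x * (a * (u * (x * a)))) = a := by
    conv_rhs => rw [hx, hu]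
    exact (r1 _).symm
  have r4 : a * (u * (x * a)) = a * a := by
    conv_lhs => rw [← r1 (u * (x * a))]
    rw [r3]
  refine ⟨x, ?_⟩
  rw [← r4]
  simp only [mul_assoc]
  exact r3.symm

private lemma lemB (h : ∀ a : S, ∃ x : S, a = a * x * (a * a)) :
    ∀ a : S, ∃ x : S, a = a * a * x * a := by
  have h1op : ∀ A : Sᵐᵒᵖ, ∃ X : Sᵐᵒᵖ, A = A * A * X * A := by
    intro A
    obtain ⟨x, hx⟩ := h A.unop
    refine ⟨MulOpposite.op x, ?_⟩
    apply MulOpposite.unop_injective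
    simp only [MulOpposite.unop_mul, MulOpposite.unop_op]
    simp only [mul_assoc] at hx ⊢
    exact hx
  intro a
  obtain ⟨X, hX⟩ := lemA h1op (MulOpposite.op a)
  refine ⟨X.unop, ?_⟩
  have := congrArg MulOpposite.unop hX
  simp only [MulOpposite.unop_mul, MulOpposite.unop_op] at this
  simp only [mul_assoc] at this ⊢
  exact this

private lemma lemC (h : ∀ a : S, ∃ x : S, a = a * a * x * a) :
    ∀ a : S, ∃ x : S, a = a * x * a ∧ a * x = x * a := by
  intro a
  obtain ⟨x, hx⟩ := h a
  obtain ⟨u, hu⟩ := h (x * a)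
  simp only [mul_assoc] at hx hu
  have r1 : ∀ y : S, a * (a * (x * (a * y))) = a * y := by
    intro y
    conv_rhs => rw [hx]
    simp only [mul_assoc]
  have r3 : a * (x * (a * (u * (x * a)))) = a := by
    conv_rhs => rw [hx, hu]
    exact (r1 _).symm
  have r4 : a * (u * (x * a)) = a * a := by
    conv_lhs => rw [← r1 (u * (x * a))]
    rw [r3]
  have r5 : a * (x * (a * a)) = a := by
    rw [← r4]
    exact r3
  refine ⟨a * (x * (a * (x * a))), ?_, ?_⟩
  · rw [r1 (x * a)]
    simp only [mul_assoc]
    exact r5.symm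
  · rw [r1 (x * a)]
    simp only [mul_assoc]
    rw [r5]

private lemma lemD (h : ∀ a : S, ∃ x : S, a = a * x * a ∧ a * x = x * a) :
    ∀ a : S, ∃ x : S, a = a * a * x * a := by
  intro a
  obtain ⟨x, hx, hc⟩ := h a
  refine ⟨x * x, ?_⟩
  have k1 : ∀ y : S, a * (x * (a * y)) = a * y := by
    intro y
    conv_rhs => rw [hx]
    simp only [mul_assoc]
  simp only [mul_assoc]
  rw [← hc, k1 x, hc]
  conv_rhs => rw [← mul_assoc, ← hx]

end Aux

theorem stmt_12 (S : Type*) [Semigroup S] :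
    ((∀ a : S, ∃ x : S, a = a * a * x * a) ↔ (∀ a : S, ∃ x : S, a = a * x * (a * a))) ∧
    ((∀ a : S, ∃ x : S, a = a * a * x * a) ↔
      (∀ a : S, ∃ x : S, a = a * x * a ∧ a * x = x * a)) := by
  exact ⟨⟨lemA, lemB⟩, ⟨lemC, lemD⟩⟩
end

section
/- In a regular semigroup S, every R-class is a subsemigroup if and only if every L-class is a subsemigroup, and each condition is equivalent to S being completely regular. -/
private lemma sandwich14 {S : Type*} [Semigroup S] (a k : S)
    (h : a = a * (a * (k * (a * a)))) : ∃ x : S, a = a * x * a ∧ a * x = x * a := by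
  have hz : ∀ z : S, a * z = a * (a * (k * (a * (a * z)))) := fun z => by
    simpa only [mul_assoc] using congrArg (· * z) h
  have hk : k * a = k * (a * (a * (k * (a * a)))) := congrArg (k * ·) h
  refine ⟨a * (k * a), ?_, ?_⟩
  · simp only [mul_assoc]
    exact h
  · simp only [mul_assoc]
    calc a * (a * (k * a))
        = a * (a * (k * (a * (a * (k * (a * a)))))) := by
          conv_lhs => rw [hk]
      _ = a * (k * (a * a)) := (hz (k * (a * a))).symm

private lemma sq_cr14 (S : Type*) [Semigroup S] (hreg : ∀ a : S, ∃ x : S, a = a * x * a)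
    (hsq : ∀ a : S, ∃ s : S, a = a * a * s) (a : S) :
    ∃ x : S, a = a * x * a ∧ a * x = x * a := by
  obtain ⟨s, hs0⟩ := hsq a
  obtain ⟨i, hi0⟩ := hreg (a * a)
  obtain ⟨w, hw0⟩ := hsq (i * a)
  have hs : a = a * (a * s) := by simpa only [mul_assoc] using hs0
  have hsz : ∀ z : S, a * z = a * (a * (s * z)) := fun z => by
    simpa only [mul_assoc] using congrArg (· * z) hs0
  have hi : a * a = a * (a * (i * (a * a))) := by simpa only [mul_assoc] using hi0
  have hiz : ∀ z : S, a * (a * z) = a * (a * (i * (a * (a * z)))) := fun z => by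
    simpa only [mul_assoc] using congrArg (· * z) hi0
  have hw : i * a = i * (a * (i * (a * w))) := by simpa only [mul_assoc] using hw0
  have hwz : ∀ z : S, i * (a * z) = i * (a * (i * (a * (w * z)))) := fun z => by
    simpa only [mul_assoc] using congrArg (· * z) hw0
  have hs_i : i * a = i * (a * (a * s)) := by
    simpa only [mul_assoc] using congrArg (i * ·) hs0
  have key : a = a * (i * (a * a)) := by
    calc a = a * (a * s) := (hs)
      _ = a * (a * (i * (a * (a * s)))) := (hiz s)
      _ = a * (a * (i * a)) := by
        conv_lhs => rw [← (hs)]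
      _ = a * (a * (i * (a * (i * (a * w))))) := by
        conv_lhs => rw [(hw)]
      _ = a * (a * (i * (a * (a * (s * (i * (a * w))))))) := by
        conv_lhs => rw [(hsz (i * (a * w)))]
      _ = a * (a * (i * (a * (a * (s * (i * (a * (a * (s * w))))))))) := by
        conv_lhs => rw [(hsz w)]
      _ = a * (a * (s * (i * (a * (a * (s * w)))))) := (hiz (s * (i * (a * (a * (s * w)))))).symm
      _ = a * (i * (a * (a * (s * w)))) := (hsz (i * (a * (a * (s * w))))).symm
      _ = a * (i * (a * (a * (i * (a * (a * (s * w))))))) := by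
        conv_lhs => rw [(hiz (s * w))]
      _ = a * (i * (a * (a * (a * (s * (i * (a * (a * (s * w))))))))) := by
        conv_lhs => rw [(hsz (i * (a * (a * (s * w)))))]
      _ = a * (i * (a * (a * (a * (s * (i * (a * w))))))) := by
        conv_lhs => rw [← (hsz w)]
      _ = a * (i * (a * (a * (a * (i * (a * (a * (s * (i * (a * w)))))))))) := by
        conv_lhs => rw [(hiz (s * (i * (a * w))))]
      _ = a * (i * (a * (a * (a * (i * (a * (i * (a * w)))))))) := by
        conv_lhs => rw [← (hsz (i * (a * w)))]
      _ = a * (i * (a * (a * (a * (i * a))))) := by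
        conv_lhs => rw [← (hw)]
      _ = a * (i * (a * (a * (a * (i * (a * (a * s))))))) := by
        conv_lhs => rw [hs_i]
      _ = a * (i * (a * (a * (a * s)))) := by
        conv_lhs => rw [← (hiz s)]
      _ = a * (i * (a * a)) := by
        conv_lhs => rw [← (hs)]
  have keyz : ∀ z : S, a * z = a * (i * (a * (a * z))) := fun z => by
    simpa only [mul_assoc] using congrArg (· * z) key
  have key_s : s * a = s * (a * (i * (a * a))) := congrArg (s * ·) key
  have hB : a = a * (a * (s * (s * (a * (i * (a * a)))))) := by
    calc a = a * (i * (a * a)) := (key)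
      _ = a * (i * (a * (a * (s * a)))) := by
        conv_lhs => rw [(hsz a)]
      _ = a * (s * a) := (keyz (s * a)).symm
      _ = a * (a * (s * (s * a))) := (hsz (s * a))
      _ = a * (a * (s * (s * (a * (i * (a * a)))))) := by
        conv_lhs => rw [key_s]
  exact sandwich14 a (s * (s * (a * i))) (by simpa only [mul_assoc] using hB)

private lemma sq_cr14' (S : Type*) [Semigroup S] (hreg : ∀ a : S, ∃ x : S, a = a * x * a)
    (hsq : ∀ a : S, ∃ s : S, a = s * (a * a)) (a : S) :
    ∃ x : S, a = a * x * a ∧ a * x = x * a := by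
  have hreg' : ∀ b : Sᵐᵒᵖ, ∃ x : Sᵐᵒᵖ, b = b * x * b := fun b => by
    obtain ⟨x, hx⟩ := hreg b.unop
    refine ⟨MulOpposite.op x, MulOpposite.unop_injective ?_⟩
    simpa only [MulOpposite.unop_mul, MulOpposite.unop_op, mul_assoc] using hx
  have hsq2 : ∀ b : Sᵐᵒᵖ, ∃ s : Sᵐᵒᵖ, b = b * b * s := fun b => by
    obtain ⟨s, hsx⟩ := hsq b.unop
    refine ⟨MulOpposite.op s, MulOpposite.unop_injective ?_⟩
    simpa only [MulOpposite.unop_mul, MulOpposite.unop_op, mul_assoc] using hsx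
  obtain ⟨x, hx1, hx2⟩ := sq_cr14 Sᵐᵒᵖ hreg' hsq2 (MulOpposite.op a)
  refine ⟨x.unop, ?_, ?_⟩
  · have h := congrArg MulOpposite.unop hx1
    simpa only [MulOpposite.unop_mul, MulOpposite.unop_op, mul_assoc] using h
  · have h := congrArg MulOpposite.unop hx2
    simpa only [MulOpposite.unop_mul, MulOpposite.unop_op] using h.symm

theorem stmt_14 (S : Type*) [Semigroup S]
    (hreg : ∀ a : S, ∃ x : S, a = a * x * a) :
    let R : S → S → Prop := fun a b =>
      (a = b ∨ ∃ s : S, a = b * s) ∧ (b = a ∨ ∃ s : S, b = a * s)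
    let L : S → S → Prop := fun a b =>
      (a = b ∨ ∃ s : S, a = s * b) ∧ (b = a ∨ ∃ s : S, b = s * a)
    ((∀ a b : S, R a b → R (a * b) a) ↔ (∀ a b : S, L a b → L (a * b) a)) ∧
    ((∀ a b : S, R a b → R (a * b) a) ↔
      (∀ a : S, ∃ x : S, a = a * x * a ∧ a * x = x * a)) := by
  intro R L
  have hRcr : (∀ a b : S, R a b → R (a * b) a) ↔
      (∀ a : S, ∃ x : S, a = a * x * a ∧ a * x = x * a) := by
    constructor
    · intro h
      refine sq_cr14 S hreg ?_
      intro a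
      have h2 := (h a a ⟨Or.inl rfl, Or.inl rfl⟩).2
      rcases h2 with heq | ⟨t, ht⟩
      · exact ⟨a, by rw [← heq]; exact heq⟩
      · exact ⟨t, ht⟩
    · intro hcr a b hab
      obtain ⟨h1, h2⟩ := hab
      obtain ⟨y, hy, hc⟩ := hcr a
      have haay : a = a * a * y := by rw [mul_assoc, hc, ← mul_assoc]; exact hy
      refine ⟨Or.inr ⟨b, rfl⟩, ?_⟩
      rcases h2 with hb | ⟨t, ht⟩
      · exact Or.inr ⟨y, by rw [hb]; exact haay⟩
      · rcases h1 with ha | ⟨r, hr⟩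
        · exact Or.inr ⟨y, by rw [← ha]; exact haay⟩
        · refine Or.inr ⟨r * y, ?_⟩
          rw [← mul_assoc, mul_assoc a b r, ← hr]
          exact haay
  have hLcr : (∀ a b : S, L a b → L (a * b) a) ↔
      (∀ a : S, ∃ x : S, a = a * x * a ∧ a * x = x * a) := by
    constructor
    · intro h
      refine sq_cr14' S hreg ?_
      intro a
      have h2 := (h a a ⟨Or.inl rfl, Or.inl rfl⟩).2
      rcases h2 with heq | ⟨t, ht⟩
      · exact ⟨a, by rw [← heq]; exact heq⟩
      · exact ⟨t, ht⟩
    · intro hcr a b hab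
      obtain ⟨h1, h2⟩ := hab
      obtain ⟨y, hy, hc⟩ := hcr a
      obtain ⟨z, hz, hzc⟩ := hcr b
      have hzbb : b = z * (b * b) := by rw [← mul_assoc, ← hzc]; exact hz
      have hkey : ∃ w : S, b = w * (a * b) := by
        rcases h2 with hb | ⟨t, ht⟩
        · refine ⟨z, ?_⟩
          rw [hb] at hzbb ⊢
          exact hzbb
        · refine ⟨z * t, ?_⟩
          nth_rewrite 2 [ht] at hzbb
          rw [mul_assoc] at hzbb
          rw [mul_assoc]
          exact hzbb
      obtain ⟨w, hw⟩ := hkey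
      constructor
      · rcases h2 with hb | ⟨t, ht⟩
        · exact Or.inr ⟨a, by rw [hb]⟩
        · exact Or.inr ⟨a * t, by rw [ht, ← mul_assoc]⟩
      · rcases h1 with ha | ⟨r, hr⟩
        · refine Or.inr ⟨w, ?_⟩
          rw [ha] at hw ⊢
          exact hw
        · refine Or.inr ⟨r * w, ?_⟩
          rw [mul_assoc, ← hw]
          exact hr
  exact ⟨hRcr.trans hLcr.symm, hRcr⟩
end

section
/- A regular semigroup S in which e*f*e = f*e for all idempotents e, f satisfies: for all a, b and all u inverse to a² and v inverse to b², (a*u*a)*(b*v*b)*(a*u*a) = (b*v*b)*(a*u*a). Conversely, if S is regular and this holds for all such a, b, u, v, then e*f*e = f*e for all idempotents e, f. -/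
theorem stmt_17 (S : Type*) [Semigroup S]
    (hreg : ∀ c : S, ∃ w : S, c = c * w * c ∧ w = w * c * w) :
    (∀ e f : S, e * e = e → f * f = f → e * f * e = f * e) ↔
    (∀ a b u v : S,
      (a * a = a * a * u * (a * a) ∧ u = u * (a * a) * u) →
      (b * b = b * b * v * (b * b) ∧ v = v * (b * b) * v) →
      (a * u * a) * (b * v * b) * (a * u * a) = (b * v * b) * (a * u * a)) := by
  constructor
  · intro h a b u v hu hv
    have he : (a * u * a) * (a * u * a) = a * u * a := by
      conv_rhs => rw [hu.2]
      simp only [mul_assoc]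
    have hf : (b * v * b) * (b * v * b) = b * v * b := by
      conv_rhs => rw [hv.2]
      simp only [mul_assoc]
    exact h _ _ he hf
  · intro h e f he hf
    have := h e f e f
      (by constructor <;> simp only [he] <;> rw [← he] <;> simp only [mul_assoc, he])
      (by constructor <;> simp only [hf] <;> rw [← hf] <;> simp only [mul_assoc, hf])
    simpa [he, hf] using this
end
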